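/- arXiv:2502.10066 — 2 statements merged into one kernel-verified Lean document; each statement's English description precedes it below -/
import Mathlib

section
/- Let G=(V,E) be a convex plane geometric path with |V| ≥ 3 whose edges all lie on the boundary of the convex hull of V, and let R ⊆ V. Then (G,R) admits a happy set if and only if |R| is even and V∖R contains an internal vertex of G (a vertex that is not an endpoint of the path). -/
open scoped Classical

noncomputable section

abbrev Pt : Type := ℝ × ℝ

/-- Two segments cross: they meet in a point that is not a common endpoint. -/
def SegCross (a b c d : Pt) : Prop :=
  ∃ x : Pt, x ∈ segment ℝ a b ∧ x ∈ segment ℝ c d ∧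
    ¬ ((x = a ∨ x = b) ∧ (x = c ∨ x = d))

/-- Crossing of two (undirected) straight-line edges. -/
def EdgeCross (e f : Sym2 Pt) : Prop :=
  ∃ a b c d : Pt, e = s(a, b) ∧ f = s(c, d) ∧ SegCross a b c d

/-- The closed segment represented by an undirected edge. -/
def SegOf (e : Sym2 Pt) : Set Pt :=
  Sym2.lift ⟨fun a b => segment ℝ a b, fun a b => segment_symm ℝ a b⟩ e

/-- General position: no three of the points are collinear. -/
def GenPos (V : Finset Pt) : Prop :=
  ∀ a ∈ V, ∀ b ∈ V, ∀ c ∈ V, a ≠ b → a ≠ c → b ≠ c →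
    ¬ Collinear ℝ ({a, b, c} : Set Pt)

/-- A plane geometric graph. -/
structure GeomGraph where
  V : Finset Pt
  E : Finset (Sym2 Pt)
  genpos : GenPos V
  edges_sub : ∀ e ∈ E, ∀ v ∈ e, v ∈ V
  edges_ne : ∀ e ∈ E, ¬ e.IsDiag
  plane : ∀ e ∈ E, ∀ f ∈ E, e ≠ f → ¬ EdgeCross e f

/-- Edges of the visibility graph of `G`. -/
def VisEdge (G : GeomGraph) (e : Sym2 Pt) : Prop :=
  ∃ u v : Pt, u ∈ G.V ∧ v ∈ G.V ∧ u ≠ v ∧ e = s(u, v) ∧ e ∉ G.E ∧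
    ∀ f ∈ G.E, ¬ EdgeCross e f

/-- Degree of a point in a finite set of undirected edges. -/
def degIn (H : Finset (Sym2 Pt)) (v : Pt) : ℕ :=
  (H.filter fun e => v ∈ e).card

/-- `H` is a happy set for `(G, R)`. -/
def IsHappySet (G : GeomGraph) (R : Finset Pt) (H : Finset (Sym2 Pt)) : Prop :=
  (∀ e ∈ H, VisEdge G e) ∧
  (∀ e ∈ H, ∀ f ∈ H, e ≠ f → ¬ EdgeCross e f) ∧
  (∀ v : Pt, Odd (degIn H v) ↔ v ∈ R)

def HasHappySet (G : GeomGraph) (R : Finset Pt) : Prop :=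
  ∃ H : Finset (Sym2 Pt), IsHappySet G R H

/-- The points of `V` are in convex position. -/
def ConvexPos (V : Finset Pt) : Prop :=
  ∀ v ∈ V, v ∉ convexHull ℝ ((V : Set Pt) \ {v})

/-- The segment `ab` lies on the boundary of the convex hull of `V`. -/
def OnHullFrontier (V : Finset Pt) (a b : Pt) : Prop :=
  segment ℝ a b ⊆ frontier (convexHull ℝ (V : Set Pt))

/-!
Label the vertices `p 0, …, p (n - 1)` along the path. Since every path edge lies on the boundary of
the hull, all other vertices lie strictly on one side of its line, and these sides agree along the
path; convex position then forces all increasing triples `p i, p j, p k` to have the same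
orientation. Consequently the visibility edges are exactly the chords `(i, j)` with `i + 2 ≤ j`,
and two of them cross iff their endpoints interleave, which makes the problem combinatorial.
A shortest chord of a happy set encloses an internal vertex of degree zero, and `|R|` is even by
the handshake lemma. Conversely, given an internal vertex `m ∉ R`, the vertices of `R` nearest to
`m` on either side are paired by chords nested around `m`, and the leftover vertices, all on one
side of `m`, are joined to the end of the path on the other side.
-/

open Finset

lemma mul_pos_of_mul_pos_of_mul_pos {x y z : ℝ} (hxy : 0 < x * y) (hyz : 0 < y * z) :
    0 < x * z := by
  nlinarith [mul_pos hxy hyz, sq_nonneg y]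

lemma mul_pos_iff_of_ne_zero {σ x y : ℝ} (hσ : σ ≠ 0) (hx : x ≠ 0) (hy : y ≠ 0) :
    0 < x * y ↔ (0 < σ * x ↔ 0 < σ * y) := by
  have key {a b : ℝ} (ha : a ≠ 0) (hb : b ≠ 0) : 0 < a * b ↔ (0 < a ↔ 0 < b) := by
    rw [mul_pos_iff]
    rcases ha.lt_or_gt with ha | ha <;> rcases hb.lt_or_gt with hb | hb <;>
      simp [ha, hb, ha.not_gt, hb.not_gt]
  rw [← key (mul_ne_zero hσ hx) (mul_ne_zero hσ hy), show σ * x * (σ * y) = σ ^ 2 * (x * y) by ring]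
  exact (mul_pos_iff_of_pos_left (sq_pos_of_ne_zero hσ)).symm

/-- Twice the signed area of the triangle `a b c`. -/
def orient (a b c : Pt) : ℝ := (b.1 - a.1) * (c.2 - a.2) - (b.2 - a.2) * (c.1 - a.1)

lemma orient_rotate (a b c : Pt) : orient b c a = orient a b c := by unfold orient; ring

lemma orient_swap_left (a b c : Pt) : orient b a c = -orient a b c := by unfold orient; ring

lemma orient_swap_right (a b c : Pt) : orient a c b = -orient a b c := by unfold orient; ring

lemma orient_smul_add_smul (a b c d : Pt) {s t : ℝ} (h : s + t = 1) :
    orient a b (s • c + t • d) = s * orient a b c + t * orient a b d := by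
  obtain rfl : s = 1 - t := by linarith
  simp only [orient, Prod.fst_add, Prod.snd_add, Prod.smul_fst, Prod.smul_snd, smul_eq_mul]
  ring

lemma orient_eq_zero_of_mem_segment {a b x : Pt} (hx : x ∈ segment ℝ a b) : orient a b x = 0 := by
  obtain ⟨s, t, -, -, hst, rfl⟩ := hx
  rw [orient_smul_add_smul a b a b hst]
  unfold orient
  ring

lemma orient_ne_zero_of_mem_segment {a b c d x : Pt} (h : 0 < orient a b c * orient a b d)
    (hx : x ∈ segment ℝ c d) : orient a b x ≠ 0 := by
  obtain ⟨s, t, hs, ht, hst, rfl⟩ := hx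
  rw [orient_smul_add_smul a b c d hst]
  set u := orient a b c
  set v := orient a b d
  intro h0
  have : u * v + t * (v * v) + s * (u * u) = 0 := by
    linear_combination (u + v) * h0 - (u * v) * hst
  nlinarith [mul_nonneg ht (mul_self_nonneg v), mul_nonneg hs (mul_self_nonneg u)]

lemma collinear_of_orient_eq_zero {a b c : Pt} (h : orient a b c = 0) :
    Collinear ℝ ({a, b, c} : Set Pt) := by
  rcases eq_or_ne a b with rfl | hab
  · simpa using collinear_pair ℝ a c
  have hw : (b.1 - a.1) ^ 2 + (b.2 - a.2) ^ 2 ≠ 0 := by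
    intro h0
    apply hab
    ext <;> nlinarith [sq_nonneg (b.1 - a.1), sq_nonneg (b.2 - a.2)]
  rw [collinear_iff_of_mem (p₀ := a) (by simp)]
  refine ⟨b - a, ?_⟩
  rintro x (rfl | rfl | rfl)
  · exact ⟨0, by simp⟩
  · exact ⟨1, by simp⟩
  · refine ⟨((b.1 - a.1) * (x.1 - a.1) + (b.2 - a.2) * (x.2 - a.2)) /
      ((b.1 - a.1) ^ 2 + (b.2 - a.2) ^ 2), ?_⟩
    unfold orient at h
    ext <;> simp only [vadd_eq_add, Prod.fst_add, Prod.snd_add, Prod.smul_fst, Prod.smul_snd,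
      Prod.fst_sub, Prod.snd_sub, smul_eq_mul] <;> field_simp
    · linear_combination -(b.2 - a.2) * h
    · linear_combination (b.1 - a.1) * h

lemma mem_convexHull_of_orient_pos {a b c d : Pt} {ε : ℝ} (h₁ : 0 < ε * orient b c d)
    (h₂ : 0 < ε * orient c a d) (h₃ : 0 < ε * orient a b d) :
    d ∈ convexHull ℝ ({a, b, c} : Set Pt) := by
  set S := ε * orient b c d + ε * orient c a d + ε * orient a b d with hS_def
  have hS : S ≠ 0 := by positivity
  -- barycentric coordinates of `d` by Cramer's rule
  have key := (convex_convexHull ℝ ({a, b, c} : Set Pt)).sum_mem (t := Finset.univ)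
    (w := ![ε * orient b c d / S, ε * orient c a d / S, ε * orient a b d / S]) (z := ![a, b, c])
    (fun i _ => by
      fin_cases i <;> simp only [Fin.isValue, Fin.zero_eta, Fin.mk_one, Fin.reduceFinMk,
        Matrix.cons_val_zero, Matrix.cons_val_one, Matrix.cons_val] <;> positivity)
    (by simp only [Fin.sum_univ_three, Fin.isValue, Matrix.cons_val_zero, Matrix.cons_val_one,
          Matrix.cons_val]
        field_simp
        rw [hS_def]
        ring)
    (fun i _ => subset_convexHull ℝ _ (by fin_cases i <;> simp))
  convert key using 1
  ext <;> simp only [Fin.sum_univ_three, Fin.isValue, Matrix.cons_val_zero, Matrix.cons_val_one,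
      Matrix.cons_val, Prod.fst_add, Prod.snd_add, Prod.smul_fst, Prod.smul_snd, smul_eq_mul] <;>
    field_simp <;> simp only [S, orient] <;> ring

lemma edgeCross_mk_iff {a b c d : Pt} : EdgeCross s(a, b) s(c, d) ↔ SegCross a b c d := by
  refine ⟨?_, fun h => ⟨a, b, c, d, rfl, rfl, h⟩⟩
  rintro ⟨a', b', c', d', he, hf, x, hab, hcd, hx⟩
  refine ⟨x, ?_, ?_, fun h => hx ?_⟩
  · rcases Sym2.eq_iff.1 he with ⟨rfl, rfl⟩ | ⟨rfl, rfl⟩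
    exacts [hab, segment_symm ℝ b a ▸ hab]
  · rcases Sym2.eq_iff.1 hf with ⟨rfl, rfl⟩ | ⟨rfl, rfl⟩
    exacts [hcd, segment_symm ℝ d c ▸ hcd]
  · rcases Sym2.eq_iff.1 he with ⟨rfl, rfl⟩ | ⟨rfl, rfl⟩ <;>
      rcases Sym2.eq_iff.1 hf with ⟨rfl, rfl⟩ | ⟨rfl, rfl⟩ <;> tauto

lemma not_segCross_of_orient_mul_pos {a b c d : Pt} (h : 0 < orient a b c * orient a b d) :
    ¬SegCross a b c d := by
  rintro ⟨x, hab, hcd, -⟩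
  exact orient_ne_zero_of_mem_segment h hcd (orient_eq_zero_of_mem_segment hab)

lemma not_segCross_of_orient_ne_zero {a b c : Pt} (h : orient a b c ≠ 0) : ¬SegCross a b a c := by
  rintro ⟨x, hab, ⟨s, t, -, -, hst, rfl⟩, hx⟩
  have h0 := orient_eq_zero_of_mem_segment hab
  rw [orient_smul_add_smul a b a c hst, orient_eq_zero_of_mem_segment (left_mem_segment ℝ a b),
    mul_zero, zero_add, mul_eq_zero] at h0
  obtain rfl : t = 0 := h0.resolve_right h
  obtain rfl : s = 1 := by linarith
  simp at hx

lemma segCross_of_orient_mul_neg {a b c d : Pt} (h₁ : orient a b c * orient a b d < 0)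
    (h₂ : orient c d a * orient c d b < 0) : SegCross a b c d := by
  have ha := left_ne_zero_of_mul h₂.ne
  have hb := right_ne_zero_of_mul h₂.ne
  set α := orient c d a
  set β := orient c d b
  set γ := orient a b c
  set δ := orient a b d
  have hαβ : α - β = δ - γ := by simp only [α, β, γ, δ, orient]; ring
  have hαβ₀ : α - β ≠ 0 := by
    intro h; rw [show β = α by linarith] at h₂; linarith [mul_self_nonneg α]
  have hγδ₀ : γ - δ ≠ 0 := by
    intro h; rw [show δ = γ by linarith] at h₁; linarith [mul_self_nonneg γ]
  have hβα₀ : β - α ≠ 0 := fun h => hαβ₀ (by linarith)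
  have hδγ₀ : δ - γ ≠ 0 := fun h => hγδ₀ (by linarith)
  have hw {u v : ℝ} (huv : u * v < 0) : 0 ≤ v / (v - u) := by
    rcases mul_neg_iff.1 huv with ⟨hu, hv⟩ | ⟨hu, hv⟩
    · exact div_nonneg_of_nonpos hv.le (by linarith)
    · exact div_nonneg hv.le (by linarith)
  -- the intersection point of the two lines, in barycentric coordinates on either segment
  have hx : (β / (β - α)) • a + (α / (α - β)) • b = (δ / (δ - γ)) • c + (γ / (γ - δ)) • d := by
    ext <;> simp only [Prod.fst_add, Prod.snd_add, Prod.smul_fst, Prod.smul_snd, smul_eq_mul] <;>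
      field_simp <;> simp only [α, β, γ, δ, orient] <;> ring
  have hxab : (β / (β - α)) • a + (α / (α - β)) • b ∈ segment ℝ a b :=
    ⟨_, _, hw h₂, hw (u := β) (by rwa [mul_comm]), by field_simp; ring, rfl⟩
  have hxcd : (β / (β - α)) • a + (α / (α - β)) • b ∈ segment ℝ c d :=
    ⟨_, _, hw h₁, hw (u := δ) (by rwa [mul_comm]), by field_simp; ring, hx.symm⟩
  refine ⟨_, hxab, hxcd, ?_⟩
  rintro ⟨hxa | hxb, -⟩
  · exact ha (by simpa [hxa] using orient_eq_zero_of_mem_segment hxcd)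
  · exact hb (by simpa [hxb] using orient_eq_zero_of_mem_segment hxcd)

lemma exists_sub_eq_mul_orient (f : StrongDual ℝ Pt) {u v : Pt} (huv : u ≠ v) (hf : f u = f v) :
    ∃ κ : ℝ, ∀ z, f z - f u = κ * orient u v z := by
  have hf_apply (z : Pt) : f z = z.1 * f (1, 0) + z.2 * f (0, 1) := by
    calc f z = f (z.1 • ((1 : ℝ), (0 : ℝ)) + z.2 • ((0 : ℝ), (1 : ℝ))) := by
          congr 1; ext <;> simp
      _ = _ := by rw [map_add, map_smul, map_smul, smul_eq_mul, smul_eq_mul]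
  have hw : (v.1 - u.1) ^ 2 + (v.2 - u.2) ^ 2 ≠ 0 := by
    intro h0
    apply huv
    ext <;> nlinarith [sq_nonneg (v.1 - u.1), sq_nonneg (v.2 - u.2)]
  have hv : f (1, 0) * (v.1 - u.1) + f (0, 1) * (v.2 - u.2) = 0 := by
    linear_combination -(hf_apply u).symm.trans (hf.trans (hf_apply v))
  refine ⟨(f (0, 1) * (v.1 - u.1) - f (1, 0) * (v.2 - u.2)) / ((v.1 - u.1) ^ 2 + (v.2 - u.2) ^ 2),
    fun z => ?_⟩
  rw [hf_apply z, hf_apply u]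
  unfold orient
  field_simp
  linear_combination ((v.1 - u.1) * (z.1 - u.1) + (v.2 - u.2) * (z.2 - u.2)) * hv

lemma orient_mul_orient_pos_of_segment_subset_frontier {s : Set Pt} (hs : Convex ℝ s)
    (hint : (interior s).Nonempty) {a b c d : Pt} (hab : a ≠ b) (hseg : segment ℝ a b ⊆ frontier s)
    (ha : a ∈ s) (hb : b ∈ s) (hc : c ∈ s) (hd : d ∈ s) (hc₀ : orient a b c ≠ 0)
    (hd₀ : orient a b d ≠ 0) : 0 < orient a b c * orient a b d := by
  have hx : (1 / 2 : ℝ) • a + (1 / 2 : ℝ) • b ∈ segment ℝ a b :=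
    ⟨_, _, by norm_num, by norm_num, by norm_num, rfl⟩
  -- a functional supporting `s` at the midpoint of `ab` is constant along the line `ab`
  obtain ⟨f, hf₀, hf⟩ := geometric_hahn_banach_of_nonempty_interior_point hs (hseg hx).2 hint
  have hfx : f ((1 / 2 : ℝ) • a + (1 / 2 : ℝ) • b) = (f a + f b) / 2 := by
    rw [map_add, map_smul, map_smul, smul_eq_mul, smul_eq_mul]; ring
  have hfa := hf a ha
  have hfb := hf b hb
  obtain ⟨κ, hκ⟩ := exists_sub_eq_mul_orient f hab (by linarith)
  have hκ₀ : κ ≠ 0 := by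
    rintro rfl
    refine hf₀ (ContinuousLinearMap.ext fun z => ?_)
    have h0 := hκ 0
    have hz := hκ z
    simp only [zero_mul, sub_eq_zero, map_zero] at h0 hz
    simp [hz, ← h0]
  have hneg {z : Pt} (hz : z ∈ s) (hz₀ : orient a b z ≠ 0) : κ * orient a b z < 0 :=
    lt_of_le_of_ne (by rw [← hκ]; linarith [hf z hz]) (mul_ne_zero hκ₀ hz₀)
  nlinarith [mul_pos_of_neg_of_neg (hneg hc hc₀) (hneg hd hd₀), sq_nonneg κ]

def Interleaved (q r : ℕ × ℕ) : Prop :=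
  q.1 < r.1 ∧ r.1 < q.2 ∧ q.2 < r.2 ∨ r.1 < q.1 ∧ q.1 < r.2 ∧ r.2 < q.2

def chordDeg (P : Finset (ℕ × ℕ)) (k : ℕ) : ℕ := #{q ∈ P | q.1 = k ∨ q.2 = k}

lemma odd_chordDeg_insert {P : Finset (ℕ × ℕ)} {q : ℕ × ℕ} (hq : q ∉ P) (k : ℕ) :
    Odd (chordDeg (insert q P) k) ↔ (Odd (chordDeg P k) ↔ ¬(q.1 = k ∨ q.2 = k)) := by
  unfold chordDeg
  rw [filter_insert]
  split_ifs with h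
  · rw [card_insert_of_notMem (fun h' => hq (mem_filter.1 h').1), Nat.odd_add_one]
    tauto
  · tauto

lemma odd_chordDeg_fan {T : Finset ℕ} {h : ℕ} (hT : h ∉ T) (heven : Even #T) (k : ℕ) :
    Odd (chordDeg (T.image fun t => (min t h, max t h)) k) ↔ k ∈ T := by
  unfold chordDeg
  rw [filter_image, card_image_of_injOn]
  · have hend (t : ℕ) : (min t h = k ∨ max t h = k) ↔ (t = k ∨ h = k) := by omega
    simp only [hend]
    rcases eq_or_ne h k with rfl | hk
    · simpa [hT] using heven
    · simp only [hk, or_false, filter_eq']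
      split_ifs <;> simp [*]
  · intro t ht t' ht' e
    have := (mem_filter.1 ht).1
    have := (mem_filter.1 ht').1
    simp only [Prod.mk.injEq] at e
    have : t ≠ h := by rintro rfl; contradiction
    have : t' ≠ h := by rintro rfl; contradiction
    omega

/-- The chords pair the points of `S` nearest to `m` on either side, so that they are nested
around `m`; the points left over, all on one side of `m`, are joined to `hi` or to `lo`. -/
theorem exists_noninterleaved_chords (S : Finset ℕ) {lo m hi : ℕ} (hS : ∀ s ∈ S, lo ≤ s ∧ s ≤ hi)
    (hlo : lo < m) (hhi : m < hi) (hm : m ∉ S) (heven : Even #S) :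
    ∃ P : Finset (ℕ × ℕ),
      (∀ q ∈ P, q.1 + 2 ≤ q.2 ∧ (q.1 = lo ∨ q.1 ∈ S) ∧ (q.2 = hi ∨ q.2 ∈ S) ∧
        (q.1 ∈ S ∨ q.2 ∈ S)) ∧
      (∀ q ∈ P, ∀ r ∈ P, ¬Interleaved q r) ∧ ∀ k, Odd (chordDeg P k) ↔ k ∈ S := by
  induction S using Finset.strongInduction with
  | H S ih =>
  by_cases hlow : ∀ s ∈ S, s < m
  · refine ⟨S.image fun t => (min t hi, max t hi), ?_, ?_,
      odd_chordDeg_fan (fun h => by have := hlow hi h; omega) heven⟩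
    · simp only [forall_mem_image]
      intro t ht
      have := hlow t ht
      rw [min_eq_left (by omega), max_eq_right (by omega)]
      exact ⟨by omega, Or.inr ht, Or.inl rfl, Or.inl ht⟩
    · simp only [forall_mem_image, Interleaved]
      intro t _ t' _
      omega
  by_cases hhigh : ∀ s ∈ S, m < s
  · refine ⟨S.image fun t => (min t lo, max t lo), ?_, ?_,
      odd_chordDeg_fan (fun h => by have := hhigh lo h; omega) heven⟩
    · simp only [forall_mem_image]
      intro t ht
      have := hhigh t ht
      rw [min_eq_right (by omega), max_eq_left (by omega)]
      exact ⟨by omega, Or.inl rfl, Or.inr ht, Or.inr ht⟩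
    · simp only [forall_mem_image, Interleaved]
      intro t _ t' _
      omega
  have hmS (s) (hs : s ∈ S) : s ≠ m := by rintro rfl; exact hm hs
  push Not at hlow hhigh
  obtain ⟨a₀, ha₀, ha₀m⟩ := hhigh
  obtain ⟨b₀, hb₀, hb₀m⟩ := hlow
  obtain ⟨a, ha, hamax⟩ := exists_max_image {s ∈ S | s < m} id
    ⟨a₀, mem_filter.2 ⟨ha₀, lt_of_le_of_ne ha₀m (hmS a₀ ha₀)⟩⟩
  obtain ⟨b, hb, hbmin⟩ := exists_min_image {s ∈ S | m < s} id
    ⟨b₀, mem_filter.2 ⟨hb₀, lt_of_le_of_ne hb₀m (hmS b₀ hb₀).symm⟩⟩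
  obtain ⟨haS, ham⟩ := mem_filter.1 ha
  obtain ⟨hbS, hbm⟩ := mem_filter.1 hb
  have hgap : ∀ s ∈ S, s ≤ a ∨ b ≤ s := fun s hs =>
    (lt_or_gt_of_ne (hmS s hs)).imp (fun h => hamax s (mem_filter.2 ⟨hs, h⟩))
      (fun h => hbmin s (mem_filter.2 ⟨hs, h⟩))
  set S' := (S.erase a).erase b
  have hS' (k : ℕ) : k ∈ S' ↔ k ∈ S ∧ k ≠ a ∧ k ≠ b := by simp only [S', mem_erase]; tauto
  have hcard : #S' + 2 = #S := by
    have := card_pos.2 ⟨b, mem_erase.2 ⟨(by omega : b ≠ a), hbS⟩⟩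
    rw [card_erase_of_mem (mem_erase.2 ⟨by omega, hbS⟩), card_erase_of_mem haS] at *
    omega
  obtain ⟨P, hPv, hPnc, hPdeg⟩ := ih S' ((erase_subset _ _).trans_ssubset (erase_ssubset haS))
    (fun s hs => hS s ((hS' s).1 hs).1) (fun h => hm ((hS' m).1 h).1)
    ((Nat.even_add.1 (hcard ▸ heven)).2 even_two)
  have hnew : (a, b) ∉ P := fun h => by simpa [hS'] using (hPv _ h).2.2.2
  have hend {x : ℕ} (hx : x = lo ∨ x = hi ∨ x ∈ S') : x ≤ a ∨ b ≤ x := by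
    rcases hx with rfl | rfl | hx
    · exact Or.inl (hS a haS).1
    · exact Or.inr (hS b hbS).2
    · exact hgap x ((hS' x).1 hx).1
  have hout (q) (hq : q ∈ P) : (q.1 ≤ a ∨ b ≤ q.1) ∧ (q.2 ≤ a ∨ b ≤ q.2) :=
    have ⟨_, h₁, h₂, _⟩ := hPv q hq
    ⟨hend (by tauto), hend (by tauto)⟩
  refine ⟨insert (a, b) P, ?_, ?_, ?_⟩
  · simp only [forall_mem_insert]
    refine ⟨⟨by omega, Or.inr haS, Or.inr hbS, Or.inl haS⟩, fun q hq => ?_⟩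
    obtain ⟨h, h₁, h₂, h₃⟩ := hPv q hq
    exact ⟨h, h₁.imp_right fun h => ((hS' _).1 h).1, h₂.imp_right fun h => ((hS' _).1 h).1,
      h₃.imp (fun h => ((hS' _).1 h).1) (fun h => ((hS' _).1 h).1)⟩
  · simp only [forall_mem_insert, Interleaved]
    refine ⟨⟨by omega, fun r hr => by have := hout r hr; omega⟩,
      fun q hq => ⟨by have := hout q hq; omega, fun r hr => hPnc q hq r hr⟩⟩
  · intro k
    rw [odd_chordDeg_insert hnew, hPdeg, hS']
    rcases eq_or_ne k a with rfl | hka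
    · simp [haS]
    rcases eq_or_ne k b with rfl | hkb
    · simp [hbS]
    simp [hka, hkb, hka.symm, hkb.symm]

lemma even_card_odd_chordDeg {n : ℕ} {P : Finset (ℕ × ℕ)} (hP : ∀ q ∈ P, q.1 < q.2 ∧ q.2 < n) :
    Even #{k ∈ range n | Odd (chordDeg P k)} := by
  rw [← even_sum_iff_even_card_odd]
  have hsum := sum_card_bipartiteAbove_eq_sum_card_bipartiteBelow
    (fun k (q : ℕ × ℕ) => q.1 = k ∨ q.2 = k) (s := range n) (t := P)
  have hends (q) (hq : q ∈ P) :
      #((range n).bipartiteBelow (fun k (q : ℕ × ℕ) => q.1 = k ∨ q.2 = k) q) = 2 := by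
    obtain ⟨h₁, h₂⟩ := hP q hq
    rw [card_eq_two]
    refine ⟨q.1, q.2, h₁.ne, ?_⟩
    ext k
    simp only [mem_bipartiteBelow, mem_range, mem_insert, mem_singleton]
    omega
  rw [sum_congr rfl hends, sum_const, smul_eq_mul] at hsum
  exact ⟨#P, by simpa [chordDeg, bipartiteAbove, mul_two, mul_comm] using hsum⟩

lemma exists_chordDeg_eq_zero {n : ℕ} (hn : 3 ≤ n) {P : Finset (ℕ × ℕ)}
    (hPv : ∀ q ∈ P, q.1 + 2 ≤ q.2 ∧ q.2 < n) (hP : ∀ q ∈ P, ∀ r ∈ P, ¬Interleaved q r) :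
    ∃ k, 0 < k ∧ k < n - 1 ∧ chordDeg P k = 0 := by
  rcases P.eq_empty_or_nonempty with rfl | hne
  · exact ⟨1, by omega, by omega, by simp [chordDeg]⟩
  -- a shortest chord `q` encloses the vertex `q.1 + 1`, which no chord can then reach
  obtain ⟨q, hq, hmin⟩ := P.exists_min_image (fun q => q.2 - q.1) hne
  have := hPv q hq
  refine ⟨q.1 + 1, by omega, by omega, card_eq_zero.2 (filter_eq_empty_iff.2 fun r hr hk => ?_)⟩
  have := hPv r hr
  have := hmin r hr
  have := hP q hq r hr
  unfold Interleaved at this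
  omega

structure IsBoundaryPath (G : GeomGraph) (n : ℕ) (p : ℕ → Pt) : Prop where
  three_le : 3 ≤ n
  injOn : ∀ i < n, ∀ j < n, p i = p j → i = j
  vertices_eq : G.V = (Finset.range n).image p
  convexPos : ConvexPos G.V
  edges_eq : G.E = (Finset.range (n - 1)).image (fun i => s(p i, p (i + 1)))
  edge_subset_frontier : ∀ e ∈ G.E, SegOf e ⊆ frontier (convexHull ℝ ((G.V : Set Pt)))

namespace IsBoundaryPath

variable {G : GeomGraph} {n : ℕ} {p : ℕ → Pt}

lemma mem_V (hP : IsBoundaryPath G n p) {i : ℕ} (hi : i < n) : p i ∈ G.V := by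
  rw [hP.vertices_eq]
  exact mem_image_of_mem p (mem_range.2 hi)

lemma apply_eq_apply_iff (hP : IsBoundaryPath G n p) {i j : ℕ} (hi : i < n) (hj : j < n) :
    p i = p j ↔ i = j :=
  ⟨hP.injOn i hi j hj, congrArg p⟩

lemma apply_ne (hP : IsBoundaryPath G n p) {i j : ℕ} (hi : i < n) (hj : j < n) (hij : i ≠ j) :
    p i ≠ p j :=
  mt (hP.apply_eq_apply_iff hi hj).1 hij

lemma not_collinear (hP : IsBoundaryPath G n p) {i j k : ℕ} (hi : i < n) (hj : j < n)
    (hk : k < n) (hij : i ≠ j) (hik : i ≠ k) (hjk : j ≠ k) :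
    ¬Collinear ℝ ({p i, p j, p k} : Set Pt) :=
  G.genpos _ (hP.mem_V hi) _ (hP.mem_V hj) _ (hP.mem_V hk) (hP.apply_ne hi hj hij)
    (hP.apply_ne hi hk hik) (hP.apply_ne hj hk hjk)

lemma orient_ne_zero (hP : IsBoundaryPath G n p) {i j k : ℕ} (hi : i < n) (hj : j < n)
    (hk : k < n) (hij : i ≠ j) (hik : i ≠ k) (hjk : j ≠ k) : orient (p i) (p j) (p k) ≠ 0 :=
  fun h => hP.not_collinear hi hj hk hij hik hjk (collinear_of_orient_eq_zero h)

lemma interior_convexHull_nonempty (hP : IsBoundaryPath G n p) :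
    (interior (convexHull ℝ (G.V : Set Pt))).Nonempty := by
  have := hP.three_le
  have hind : AffineIndependent ℝ ![p 0, p 1, p 2] := affineIndependent_iff_not_collinear_set.2
    (hP.not_collinear (by omega) (by omega) (by omega) (by omega) (by omega) (by omega))
  rw [interior_convexHull_nonempty_iff_affineSpan_eq_top]
  refine top_unique ((hind.affineSpan_eq_top_iff_card_eq_finrank_add_one.2 (by simp)).ge.trans
    (affineSpan_mono ℝ ?_))
  rintro _ ⟨i, rfl⟩
  fin_cases i
  exacts [hP.mem_V (by omega), hP.mem_V (by omega), hP.mem_V (by omega)]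

lemma orient_edge_mul_pos (hP : IsBoundaryPath G n p) {t k l : ℕ} (ht : t + 1 < n) (hk : k < n)
    (hl : l < n) (hkt : k ≠ t) (hkt' : k ≠ t + 1) (hlt : l ≠ t) (hlt' : l ≠ t + 1) :
    0 < orient (p t) (p (t + 1)) (p k) * orient (p t) (p (t + 1)) (p l) := by
  have hV := subset_convexHull ℝ (G.V : Set Pt)
  have hE : s(p t, p (t + 1)) ∈ G.E := by
    rw [hP.edges_eq]
    exact mem_image_of_mem _ (mem_range.2 (by omega))
  exact orient_mul_orient_pos_of_segment_subset_frontier (convex_convexHull ℝ _)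
    hP.interior_convexHull_nonempty (hP.apply_ne (by omega) ht (by omega))
    (hP.edge_subset_frontier _ hE) (hV (hP.mem_V (by omega))) (hV (hP.mem_V ht))
    (hV (hP.mem_V hk)) (hV (hP.mem_V hl))
    (hP.orient_ne_zero (by omega) ht hk (by omega) (Ne.symm hkt) (Ne.symm hkt'))
    (hP.orient_ne_zero (by omega) ht hl (by omega) (Ne.symm hlt) (Ne.symm hlt'))

lemma orient_edge_pos (hP : IsBoundaryPath G n p) {t k : ℕ} (ht : t + 1 < n) (hk : k < n)
    (hkt : k ≠ t) (hkt' : k ≠ t + 1) :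
    0 < orient (p 0) (p 1) (p 2) * orient (p t) (p (t + 1)) (p k) := by
  induction t generalizing k with
  | zero =>
    rw [mul_comm]
    exact hP.orient_edge_mul_pos ht hk (by have := hP.three_le; omega) hkt hkt' (by omega)
      (by omega)
  | succ t ih =>
    have hnext := hP.orient_edge_mul_pos ht (k := t) (by omega) hk (by omega) (by omega) hkt hkt'
    rw [orient_rotate (p t)] at hnext
    exact mul_pos_of_mul_pos_of_mul_pos (ih (by omega) ht (by omega) (by omega)) hnext

lemma orient_pos (hP : IsBoundaryPath G n p) {i j k : ℕ} (hij : i < j) (hjk : j < k) (hk : k < n) :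
    0 < orient (p 0) (p 1) (p 2) * orient (p i) (p j) (p k) := by
  have := hP.three_le
  induction j, hij using Nat.le_induction generalizing k with
  | base => exact hP.orient_edge_pos (by omega) hk (by omega) (by omega)
  | succ j hij ih =>
    by_contra hneg
    have hσ := mul_ne_zero (hP.orient_ne_zero (i := 0) (j := 1) (k := 2) (by omega) (by omega)
      (by omega) (by omega) (by omega) (by omega))
      (hP.orient_ne_zero (i := i) (j := j + 1) (k := k) (by omega) (by omega) hk (by omega)
        (by omega) (by omega))
    have h₁ := ih (by omega) hk
    have h₂ := hP.orient_edge_pos (t := j) (by omega) hk (by omega) (by omega)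
    have h₃ : 0 < orient (p 0) (p 1) (p 2) * orient (p (j + 1)) (p i) (p k) := by
      rw [orient_swap_left (p i)]
      linarith [lt_of_le_of_ne (not_lt.1 hneg) hσ]
    -- otherwise `p k` would lie in the triangle `p i, p j, p (j + 1)`
    refine hP.convexPos (p k) (hP.mem_V hk)
      (convexHull_mono ?_ (mem_convexHull_of_orient_pos h₂ h₃ h₁))
    simp only [Set.insert_subset_iff, Set.singleton_subset_iff, Set.mem_sdiff,
      Set.mem_singleton_iff, Finset.mem_coe]
    exact ⟨⟨hP.mem_V (by omega), hP.apply_ne (by omega) hk (by omega)⟩,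
      ⟨hP.mem_V (by omega), hP.apply_ne (by omega) hk (by omega)⟩,
      hP.mem_V (by omega), hP.apply_ne (by omega) hk (by omega)⟩

lemma orient_pos_iff (hP : IsBoundaryPath G n p) {i j k : ℕ} (hij : i < j) (hj : j < n)
    (hk : k < n) (hki : k ≠ i) (hkj : k ≠ j) :
    0 < orient (p 0) (p 1) (p 2) * orient (p i) (p j) (p k) ↔ k < i ∨ j < k := by
  rcases lt_or_gt_of_ne hki with hki | hki
  · rw [orient_rotate (p k)]
    exact iff_of_true (hP.orient_pos hki hij hj) (Or.inl hki)
  rcases lt_or_gt_of_ne hkj with hkj | hkj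
  · have := hP.orient_pos hki hkj hj
    rw [orient_swap_right (p i) (p j)] at this
    exact iff_of_false (by linarith) (by omega)
  · exact iff_of_true (hP.orient_pos hij hkj hk) (Or.inr hkj)

lemma orient_mul_orient_pos_iff (hP : IsBoundaryPath G n p) {i j k l : ℕ} (hij : i < j)
    (hj : j < n) (hk : k < n) (hl : l < n) (hki : k ≠ i) (hkj : k ≠ j) (hli : l ≠ i)
    (hlj : l ≠ j) :
    0 < orient (p i) (p j) (p k) * orient (p i) (p j) (p l) ↔
      ((k < i ∨ j < k) ↔ (l < i ∨ j < l)) := by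
  have := hP.three_le
  rw [← hP.orient_pos_iff hij hj hk hki hkj, ← hP.orient_pos_iff hij hj hl hli hlj]
  exact mul_pos_iff_of_ne_zero
    (hP.orient_ne_zero (by omega) (by omega) (by omega) (by omega) (by omega) (by omega))
    (hP.orient_ne_zero (by omega) hj hk (by omega) hki.symm hkj.symm)
    (hP.orient_ne_zero (by omega) hj hl (by omega) hli.symm hlj.symm)

theorem edgeCross_iff (hP : IsBoundaryPath G n p) {i j k l : ℕ} (hij : i < j) (hj : j < n)
    (hkl : k < l) (hl : l < n) (hne : (i, j) ≠ (k, l)) :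
    EdgeCross s(p i, p j) s(p k, p l) ↔ Interleaved (i, j) (k, l) := by
  have ho {a b c : ℕ} (ha : a < n) (hb : b < n) (hc : c < n) (hab : a ≠ b) (hac : a ≠ c)
      (hbc : b ≠ c) := hP.orient_ne_zero ha hb hc hab hac hbc
  unfold Interleaved
  rcases eq_or_ne i k with rfl | hik
  · have hjl : j ≠ l := fun h => hne (by rw [h])
    rw [edgeCross_mk_iff]
    exact iff_of_false (not_segCross_of_orient_ne_zero
      (ho (by omega) hj hl (by omega) (by omega) hjl)) (by omega)
  rcases eq_or_ne j l with rfl | hjl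
  · rw [Sym2.eq_swap (a := p i), Sym2.eq_swap (a := p k), edgeCross_mk_iff]
    exact iff_of_false (not_segCross_of_orient_ne_zero
      (ho hj (by omega) (by omega) (by omega) (by omega) hik)) (by omega)
  rcases eq_or_ne i l with rfl | hil
  · rw [Sym2.eq_swap (a := p k), edgeCross_mk_iff]
    exact iff_of_false (not_segCross_of_orient_ne_zero
      (ho (by omega) hj (by omega) (by omega) (by omega) (by omega))) (by omega)
  rcases eq_or_ne j k with rfl | hjk
  · rw [Sym2.eq_swap (a := p i), edgeCross_mk_iff]
    exact iff_of_false (not_segCross_of_orient_ne_zero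
      (ho hj (by omega) hl (by omega) (by omega) (by omega))) (by omega)
  have hside := hP.orient_mul_orient_pos_iff hij hj (by omega : k < n) hl hik.symm hjk.symm
    hil.symm hjl.symm
  have hside' := hP.orient_mul_orient_pos_iff hkl hl (by omega : i < n) (by omega) hik hil hjk hjl
  rw [edgeCross_mk_iff]
  refine ⟨fun h => by_contra fun hI => not_segCross_of_orient_mul_pos (hside.2 (by omega)) h,
    fun hI => segCross_of_orient_mul_neg ?_ ?_⟩
  · exact lt_of_le_of_ne (not_lt.1 (mt hside.1 (by omega)))
      (mul_ne_zero (ho (by omega) hj (by omega) (by omega) hik hjk)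
        (ho (by omega) hj hl (by omega) hil hjl))
  · exact lt_of_le_of_ne (not_lt.1 (mt hside'.1 (by omega)))
      (mul_ne_zero (ho (by omega) hl (by omega) (by omega) (Ne.symm hik) (Ne.symm hil))
        (ho (by omega) hl hj (by omega) (Ne.symm hjk) (Ne.symm hjl)))

lemma mem_E_iff (hP : IsBoundaryPath G n p) {e : Sym2 Pt} :
    e ∈ G.E ↔ ∃ t, t + 1 < n ∧ e = s(p t, p (t + 1)) := by
  rw [hP.edges_eq, mem_image]
  constructor
  · rintro ⟨t, ht, rfl⟩
    exact ⟨t, by have := mem_range.1 ht; omega, rfl⟩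
  · rintro ⟨t, ht, rfl⟩
    exact ⟨t, mem_range.2 (by omega), rfl⟩

lemma mk_eq_mk_iff (hP : IsBoundaryPath G n p) {i j k l : ℕ} (hij : i < j) (hj : j < n)
    (hkl : k < l) (hl : l < n) : s(p i, p j) = s(p k, p l) ↔ i = k ∧ j = l := by
  rw [Sym2.eq_iff, hP.apply_eq_apply_iff (by omega) (by omega),
    hP.apply_eq_apply_iff hj hl, hP.apply_eq_apply_iff (by omega) hl,
    hP.apply_eq_apply_iff hj (by omega)]
  omega

theorem visEdge_iff (hP : IsBoundaryPath G n p) {e : Sym2 Pt} :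
    VisEdge G e ↔ ∃ i j, i + 2 ≤ j ∧ j < n ∧ e = s(p i, p j) := by
  constructor
  · rintro ⟨u, v, hu, hv, huv, rfl, hE, -⟩
    rw [hP.vertices_eq] at hu hv
    obtain ⟨i, hi, rfl⟩ := mem_image.1 hu
    obtain ⟨j, hj, rfl⟩ := mem_image.1 hv
    rw [mem_range] at hi hj
    have hadj (a : ℕ) (ha : a + 1 < n) : s(p a, p (a + 1)) ∈ G.E := hP.mem_E_iff.2 ⟨a, ha, rfl⟩
    rcases lt_trichotomy i j with h | rfl | h
    · refine ⟨i, j, ?_, hj, rfl⟩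
      by_contra h'
      exact hE (by rw [show j = i + 1 by omega]; exact hadj i (by omega))
    · exact absurd rfl huv
    · refine ⟨j, i, ?_, hi, Sym2.eq_swap⟩
      by_contra h'
      exact hE (by rw [show i = j + 1 by omega, Sym2.eq_swap]; exact hadj j (by omega))
  · rintro ⟨i, j, hij, hj, rfl⟩
    refine ⟨p i, p j, hP.mem_V (by omega), hP.mem_V hj, hP.apply_ne (by omega) hj (by omega), rfl,
      fun h => ?_, fun f hf => ?_⟩
    · obtain ⟨t, ht, he⟩ := hP.mem_E_iff.1 h
      have := (hP.mk_eq_mk_iff (by omega) hj (by omega) ht).1 he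
      omega
    · obtain ⟨t, ht, rfl⟩ := hP.mem_E_iff.1 hf
      rw [hP.edgeCross_iff (by omega) hj (by omega) ht (by rw [Ne, Prod.mk.injEq]; omega), Interleaved]
      omega

lemma degIn_image_apply (hP : IsBoundaryPath G n p) {P : Finset (ℕ × ℕ)}
    (hPv : ∀ q ∈ P, q.1 < q.2 ∧ q.2 < n) {k : ℕ} (hk : k < n) :
    degIn (P.image fun q => s(p q.1, p q.2)) (p k) = chordDeg P k := by
  unfold degIn chordDeg
  rw [filter_image, card_image_of_injOn]
  · congr 1
    refine filter_congr fun q hq => ?_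
    have := hPv q hq
    rw [Sym2.mem_iff, hP.apply_eq_apply_iff hk (by omega), hP.apply_eq_apply_iff hk (by omega)]
    omega
  · intro q hq r hr h
    have := hPv q (mem_filter.1 hq).1
    have := hPv r (mem_filter.1 hr).1
    exact Prod.ext_iff.2 ((hP.mk_eq_mk_iff (by omega) (by omega) (by omega) (by omega)).1 h)

lemma degIn_image_eq_zero (hP : IsBoundaryPath G n p) {P : Finset (ℕ × ℕ)}
    (hPv : ∀ q ∈ P, q.1 < q.2 ∧ q.2 < n) {v : Pt} (hv : v ∉ G.V) :
    degIn (P.image fun q => s(p q.1, p q.2)) v = 0 := by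
  refine card_eq_zero.2 (filter_eq_empty_iff.2 fun e he hve => hv ?_)
  obtain ⟨q, hq, rfl⟩ := mem_image.1 he
  have := hPv q hq
  rcases Sym2.mem_iff.1 hve with rfl | rfl
  exacts [hP.mem_V (by omega), hP.mem_V (by omega)]

lemma isHappySet_image_iff (hP : IsBoundaryPath G n p) {R : Finset Pt} (hR : R ⊆ G.V)
    {P : Finset (ℕ × ℕ)} (hPv : ∀ q ∈ P, q.1 + 2 ≤ q.2 ∧ q.2 < n) :
    IsHappySet G R (P.image fun q => s(p q.1, p q.2)) ↔
      (∀ q ∈ P, ∀ r ∈ P, ¬Interleaved q r) ∧ ∀ k < n, (Odd (chordDeg P k) ↔ p k ∈ R) := by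
  have hPv' (q) (hq : q ∈ P) : q.1 < q.2 ∧ q.2 < n := by have := hPv q hq; omega
  have hvis : ∀ e ∈ P.image fun q => s(p q.1, p q.2), VisEdge G e :=
    forall_mem_image.2 fun q hq => hP.visEdge_iff.2 ⟨q.1, q.2, (hPv q hq).1, (hPv q hq).2, rfl⟩
  have hcross : (∀ e ∈ P.image fun q => s(p q.1, p q.2), ∀ f ∈ P.image fun q => s(p q.1, p q.2),
      e ≠ f → ¬EdgeCross e f) ↔ ∀ q ∈ P, ∀ r ∈ P, ¬Interleaved q r := by
    simp only [forall_mem_image]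
    refine forall₂_congr fun q hq => forall₂_congr fun r hr => ?_
    obtain ⟨hq₁, hq₂⟩ := hPv' q hq
    obtain ⟨hr₁, hr₂⟩ := hPv' r hr
    rcases eq_or_ne q r with rfl | hqr
    · simp [Interleaved]
    · have hne : s(p q.1, p q.2) ≠ s(p r.1, p r.2) := fun h =>
        hqr (Prod.ext_iff.2 ((hP.mk_eq_mk_iff hq₁ hq₂ hr₁ hr₂).1 h))
      rw [hP.edgeCross_iff hq₁ hq₂ hr₁ hr₂ hqr]
      exact ⟨fun h => h hne, fun h _ => h⟩
  have hodd : (∀ v, Odd (degIn (P.image fun q => s(p q.1, p q.2)) v) ↔ v ∈ R) ↔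
      ∀ k < n, (Odd (chordDeg P k) ↔ p k ∈ R) := by
    refine ⟨fun h k hk => hP.degIn_image_apply hPv' hk ▸ h (p k), fun h v => ?_⟩
    by_cases hv : v ∈ G.V
    · rw [hP.vertices_eq] at hv
      obtain ⟨k, hk, rfl⟩ := mem_image.1 hv
      rw [hP.degIn_image_apply hPv' (mem_range.1 hk)]
      exact h k (mem_range.1 hk)
    · rw [hP.degIn_image_eq_zero hPv' hv]
      exact iff_of_false (by simp) fun h => hv (hR h)
  rw [IsHappySet, hcross, hodd]
  exact and_iff_right hvis

lemma exists_eq_image_of_visEdge (hP : IsBoundaryPath G n p) {H : Finset (Sym2 Pt)}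
    (hH : ∀ e ∈ H, VisEdge G e) :
    ∃ P : Finset (ℕ × ℕ), (∀ q ∈ P, q.1 + 2 ≤ q.2 ∧ q.2 < n) ∧
      H = P.image fun q => s(p q.1, p q.2) := by
  refine ⟨{q ∈ range n ×ˢ range n | q.1 + 2 ≤ q.2 ∧ s(p q.1, p q.2) ∈ H}, fun q hq => ?_, ?_⟩
  · simp only [mem_filter, mem_product, mem_range] at hq
    exact ⟨hq.2.1, hq.1.2⟩
  · ext e
    simp only [mem_image, mem_filter, mem_product, mem_range, Prod.exists]
    constructor
    · intro he
      obtain ⟨i, j, hij, hj, rfl⟩ := hP.visEdge_iff.1 (hH e he)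
      exact ⟨i, j, ⟨⟨by omega, hj⟩, hij, he⟩, rfl⟩
    · rintro ⟨i, j, ⟨-, -, he⟩, rfl⟩
      exact he

theorem hasHappySet_iff (hP : IsBoundaryPath G n p) {R : Finset Pt} (hR : R ⊆ G.V) :
    HasHappySet G R ↔ ∃ P : Finset (ℕ × ℕ), (∀ q ∈ P, q.1 + 2 ≤ q.2 ∧ q.2 < n) ∧
      (∀ q ∈ P, ∀ r ∈ P, ¬Interleaved q r) ∧ ∀ k < n, (Odd (chordDeg P k) ↔ p k ∈ R) := by
  constructor
  · rintro ⟨H, hH⟩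
    obtain ⟨P, hPv, rfl⟩ := hP.exists_eq_image_of_visEdge hH.1
    exact ⟨P, hPv, (hP.isHappySet_image_iff hR hPv).1 hH⟩
  · rintro ⟨P, hPv, hP'⟩
    exact ⟨_, (hP.isHappySet_image_iff hR hPv).2 hP'⟩

lemma card_filter_apply_mem (hP : IsBoundaryPath G n p) {R : Finset Pt} (hR : R ⊆ G.V) :
    #{k ∈ range n | p k ∈ R} = #R := by
  rw [← card_image_of_injOn fun i hi j hj h =>
    hP.injOn i (mem_range.1 (mem_filter.1 hi).1) j (mem_range.1 (mem_filter.1 hj).1) h]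
  congr 1
  ext v
  simp only [mem_image, mem_filter]
  refine ⟨fun ⟨k, ⟨_, hk⟩, hkv⟩ => hkv ▸ hk, fun hv => ?_⟩
  have := hR hv
  rw [hP.vertices_eq, mem_image] at this
  obtain ⟨k, hk, rfl⟩ := this
  exact ⟨k, ⟨hk, hv⟩, rfl⟩

end IsBoundaryPath

/-- Let `G = (V, E)` be a convex plane geometric path with `|V| ≥ 3` whose
edges all lie on the boundary of the convex hull of `V`, and let `R ⊆ V`.  Then `(G, R)` admits
a happy set if and only if `|R|` is even and `V \ R` contains an internal vertex of the path
(a vertex that is not an endpoint of the path). -/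
theorem convex_path_happySet_iff
    (G : GeomGraph) (n : ℕ) (hn : 3 ≤ n) (p : ℕ → Pt)
    (hinj : ∀ i < n, ∀ j < n, p i = p j → i = j)
    (hV : G.V = (Finset.range n).image p)
    (hconv : ConvexPos G.V)
    (hE : G.E = (Finset.range (n - 1)).image (fun i => s(p i, p (i + 1))))
    (hhull : ∀ e ∈ G.E, SegOf e ⊆ frontier (convexHull ℝ ((G.V : Set Pt))))
    (R : Finset Pt) (hR : R ⊆ G.V) :
    HasHappySet G R ↔
      (Even R.card ∧ ∃ v ∈ G.V, v ∉ R ∧ v ≠ p 0 ∧ v ≠ p (n - 1)) := by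
  have hP : IsBoundaryPath G n p := ⟨hn, hinj, hV, hconv, hE, hhull⟩
  rw [hP.hasHappySet_iff hR, ← hP.card_filter_apply_mem hR]
  constructor
  · rintro ⟨P, hPv, hPnc, hPdeg⟩
    refine ⟨?_, ?_⟩
    · rw [← filter_congr fun k hk => hPdeg k (mem_range.1 hk)]
      exact even_card_odd_chordDeg fun q hq => by have := hPv q hq; omega
    · obtain ⟨k, hk₀, hkn, hk⟩ := exists_chordDeg_eq_zero hn hPv hPnc
      refine ⟨p k, hP.mem_V (by omega), fun hkR => ?_, hP.apply_ne (by omega) (by omega) (by omega),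
        hP.apply_ne (by omega) (by omega) (by omega)⟩
      simpa [hk] using (hPdeg k (by omega)).2 hkR
  · rintro ⟨heven, v, hv, hvR, hv₀, hv₁⟩
    rw [hV, mem_image] at hv
    obtain ⟨m, hm, rfl⟩ := hv
    have hm₀ : m ≠ 0 := by rintro rfl; exact hv₀ rfl
    have hm₁ : m ≠ n - 1 := by rintro rfl; exact hv₁ rfl
    rw [mem_range] at hm
    obtain ⟨P, hPv, hPnc, hPdeg⟩ := exists_noninterleaved_chords {k ∈ range n | p k ∈ R} (lo := 0) (m := m)
      (hi := n - 1) (fun s hs => by simp only [mem_filter, mem_range] at hs; omega) (by omega)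
      (by omega) (by simp [hvR]) heven
    refine ⟨P, fun q hq => ?_, hPnc, fun k hk => by simp [hPdeg, hk]⟩
    obtain ⟨h, -, h₂, -⟩ := hPv q hq
    simp only [mem_filter, mem_range] at h₂
    omega
end
end

section
/- Let G be a finite connected simple graph and let R be a subset of its vertex set with |R| even. Then G has a spanning subgraph H such that the set of vertices having odd degree in H is exactly R. -/
open scoped Classical

private lemma odd_card_symmDiff {α : Type*} [DecidableEq α] (A B : Finset α) :
    Odd ((symmDiff A B).card) ↔ ¬ (Odd A.card ↔ Odd B.card) := by
  have h : (symmDiff A B).card + 2 * (A ∩ B).card = A.card + B.card := by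
    rw [symmDiff_def, Finset.sup_eq_union]
    have hdisj : Disjoint (A \ B) (B \ A) := disjoint_sdiff_sdiff
    rw [Finset.card_union_of_disjoint hdisj]
    have h1 := Finset.card_sdiff_add_card_inter A B
    have h2 := Finset.card_sdiff_add_card_inter B A
    rw [Finset.inter_comm B A] at h2
    omega
  rcases Nat.even_or_odd A.card with hA | hA <;>
    rcases Nat.even_or_odd B.card with hB | hB <;>
    rcases hA with ⟨a, ha⟩ <;> rcases hB with ⟨b, hb⟩ <;>
    constructor <;> intro hh <;>
    first
      | (exfalso; rcases hh with ⟨c, hc⟩; omega)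
      | (simp only [Nat.odd_iff, Nat.even_iff] at * ; omega)
      | tauto
      | (refine ⟨(A.card + B.card - 2 * (A ∩ B).card - 1) / 2, ?_⟩; omega)

private lemma filter_symmDiff' {α : Type*} [DecidableEq α] (A B : Finset α)
    (p : α → Prop) [DecidablePred p] :
    (symmDiff A B).filter p = symmDiff (A.filter p) (B.filter p) := by
  ext x
  simp [Finset.mem_symmDiff, Finset.mem_filter]
  tauto

private def toggleList {α : Type*} [DecidableEq α] : List α → Finset α
  | [] => ∅
  | e :: l => symmDiff ({e} : Finset α) (toggleList l)

private lemma toggleList_cons {α : Type*} [DecidableEq α] (e : α) (l : List α) :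
    toggleList (e :: l) = symmDiff ({e} : Finset α) (toggleList l) := rfl

private lemma walkF_subset {V : Type*} [DecidableEq V] {G : SimpleGraph V}
    {u v : V} (p : G.Walk u v) : ∀ e ∈ toggleList p.edges, e ∈ G.edgeSet := by
  induction p with
  | nil => simp [toggleList]
  | cons h p ih =>
    intro e he
    simp only [SimpleGraph.Walk.edges_cons, toggleList, Finset.mem_symmDiff] at he
    rcases he with ⟨he, _⟩ | ⟨he, _⟩
    · simp at he; subst he; exact h
    · exact ih e he

private lemma walkF_parity {V : Type*} [DecidableEq V] {G : SimpleGraph V}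
    {u v : V} (p : G.Walk u v) (x : V) :
    Odd (((toggleList p.edges).filter fun e => x ∈ e).card) ↔ ¬ (x = u ↔ x = v) := by
  induction p with
  | nil => simp [toggleList]
  | @cons u w v h p ih =>
    rw [SimpleGraph.Walk.edges_cons, toggleList_cons, filter_symmDiff', odd_card_symmDiff, ih]
    have hne : u ≠ w := h.ne
    have hsing : Odd ((({s(u, w)} : Finset (Sym2 V)).filter fun e => x ∈ e).card) ↔
        (x = u ∨ x = w) := by
      by_cases hx : x ∈ s(u, w)
      · rw [Finset.filter_singleton, if_pos hx]
        simp only [Sym2.mem_iff] at hx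
        simp [hx]
      · rw [Finset.filter_singleton, if_neg hx]
        simp only [Sym2.mem_iff] at hx
        simp only [Finset.card_empty]
        push_neg at hx
        simp [hx.1, hx.2]
    rw [hsing]
    constructor
    · intro hiff
      by_cases h1 : x = u <;> by_cases h2 : x = w <;> by_cases h3 : x = v <;>
        simp_all <;> tauto
    · intro hiff
      by_cases h1 : x = u <;> by_cases h2 : x = w <;> by_cases h3 : x = v <;>
        simp_all <;> tauto

/-- Let `G` be a finite connected simple graph and let `R` be a subset of
its vertex set with `|R|` even.  Then `G` has a spanning subgraph `H` (given by a set `F` of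
edges of `G`) such that the set of vertices having odd degree in `H` is exactly `R`. -/
theorem exists_spanning_subgraph_with_odd_degree_set
    {V : Type*} [Fintype V] (G : SimpleGraph V) (hG : G.Connected)
    (R : Finset V) (hR : Even R.card) :
    ∃ F : Finset (Sym2 V), (∀ e ∈ F, e ∈ G.edgeSet) ∧
      ∀ v : V, (Odd ((F.filter fun e => v ∈ e).card) ↔ v ∈ R) := by
  suffices h : ∀ n (R : Finset V), Even R.card → R.card = n →
      ∃ F : Finset (Sym2 V), (∀ e ∈ F, e ∈ G.edgeSet) ∧
        ∀ v : V, (Odd ((F.filter fun e => v ∈ e).card) ↔ v ∈ R) from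
    h R.card R hR rfl
  intro n
  induction n using Nat.strong_induction_on with
  | _ n ih =>
  intro R hR hn
  rcases Nat.eq_zero_or_pos n with h0 | hpos
  · subst h0
    have : R = ∅ := Finset.card_eq_zero.mp hn
    subst this
    exact ⟨∅, by simp, by simp⟩
  · obtain ⟨u, hu⟩ := Finset.card_pos.mp (hn ▸ hpos)
    have h2 : 0 < (R.erase u).card := by
      rw [Finset.card_erase_of_mem hu]
      rcases hR with ⟨k, hk⟩
      omega
    obtain ⟨v, hv⟩ := Finset.card_pos.mp h2
    have hvu : v ≠ u := Finset.ne_of_mem_erase hv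
    have hvR : v ∈ R := Finset.mem_of_mem_erase hv
    set R' := (R.erase u).erase v with hR'
    have hcard' : R'.card = R.card - 2 := by
      rw [hR', Finset.card_erase_of_mem hv, Finset.card_erase_of_mem hu]
      omega
    have hR'even : Even R'.card := by
      rcases hR with ⟨k, hk⟩
      rw [hcard', hk]
      exact ⟨k - 1, by omega⟩
    have hlt : R'.card < n := by
      rw [hcard', hn]; omega
    obtain ⟨F', hF'G, hF'⟩ := ih R'.card hlt R' hR'even rfl
    obtain ⟨p⟩ := hG.preconnected u v
    refine ⟨symmDiff (toggleList p.edges) F', ?_, ?_⟩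
    · intro e he
      rw [Finset.mem_symmDiff] at he
      rcases he with ⟨he, _⟩ | ⟨he, _⟩
      · exact walkF_subset p e he
      · exact hF'G e he
    · intro x
      rw [filter_symmDiff', odd_card_symmDiff, walkF_parity p x, hF' x]
      have hxR' : x ∈ R' ↔ (x ∈ R ∧ x ≠ u ∧ x ≠ v) := by
        simp [hR', Finset.mem_erase]; tauto
      rw [hxR']
      by_cases h1 : x = u <;> by_cases h2 : x = v <;> simp_all <;> tauto
end
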